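/- Let G be a chordal graph, s a simplicial vertex of G, and {v₀, v₁, v₂} a clique of the auxiliary graph G^s with v₁, v₂ ∈ N_G(s) and v₀ ∉ N_G[s]. If there is no witness of the clique {v₀, v₁, v₂}, then {v₀, v₁, v₂} is a clique of G. -/

import Mathlib

/-- The closed neighborhood `N[v]` of a vertex. -/
def closedNbr {V : Type*} (G : SimpleGraph V) (v : V) : Set V := insert v (G.neighborSet v)

/-- A vertex is simplicial if its closed neighborhood is a clique. -/
def Simplicial {V : Type*} (G : SimpleGraph V) (s : V) : Prop := G.IsClique (closedNbr G s)

/-- A vertex is universal if it is adjacent to all other vertices. -/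
def Universal {V : Type*} (G : SimpleGraph V) (v : V) : Prop := ∀ u, u ≠ v → G.Adj v u

/-- The auxiliary graph `G^s` with respect to a simplicial vertex `s`. -/
def auxGraph {V : Type*} (G : SimpleGraph V) (s : V) : SimpleGraph V where
  Adj u v := u ≠ v ∧
    ((u ∉ closedNbr G s ∧ v ∉ closedNbr G s ∧ G.Adj u v) ∨
     (u ∈ closedNbr G s ∧ v ∈ closedNbr G s ∧ G.neighborSet u ∪ G.neighborSet v ≠ Set.univ) ∨
     (u ∈ closedNbr G s ∧ v ∉ closedNbr G s ∧ ¬ closedNbr G v ⊆ closedNbr G u) ∨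
     (v ∈ closedNbr G s ∧ u ∉ closedNbr G s ∧ ¬ closedNbr G u ⊆ closedNbr G v))
  symm := ⟨by
    rintro u v ⟨hne, h⟩
    refine ⟨hne.symm, ?_⟩
    rcases h with ⟨h1, h2, h3⟩ | ⟨h1, h2, h3⟩ | h | h
    · exact Or.inl ⟨h2, h1, h3.symm⟩
    · exact Or.inr (Or.inl ⟨h2, h1, by rwa [Set.union_comm] at h3⟩)
    · exact Or.inr (Or.inr (Or.inr h))
    · exact Or.inr (Or.inr (Or.inl h))⟩
  loopless := ⟨fun v h => h.1 rfl⟩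

/-- A witness of an edge `uv` of `G^s`: a vertex `w ∉ N_G[s]` such that for each end `x`,
`w` is adjacent to `x` in `G` iff `x ∉ N_G[s]`. -/
def EdgeWitness {V : Type*} (G : SimpleGraph V) (s u v w : V) : Prop :=
  w ∉ closedNbr G s ∧ (G.Adj w u ↔ u ∉ closedNbr G s) ∧ (G.Adj w v ↔ v ∉ closedNbr G s)

/-- An edge of `G^s` is collateral if it is an edge of `G` and one end is in `N_G[s]`. -/
def Collateral {V : Type*} (G : SimpleGraph V) (s u v : V) : Prop :=
  (auxGraph G s).Adj u v ∧ G.Adj u v ∧ (u ∈ closedNbr G s ∨ v ∈ closedNbr G s)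

/-- A witness of a clique `K` of `G^s`: a vertex `w ∉ N_G[s]` such that `N_G[w] ∩ K` and
`N_G[s] ∩ K` partition `K`. -/
def CliqueWitness {V : Type*} (G : SimpleGraph V) (s : V) (K : Set V) (w : V) : Prop :=
  w ∉ closedNbr G s ∧ ∀ x ∈ K, (x ∈ closedNbr G w ↔ x ∉ closedNbr G s)

/-- A graph is chordal if it has no induced cycle of length at least four. -/
def Chordal {V : Type*} (G : SimpleGraph V) : Prop :=
  ¬ ∃ (n : ℕ) (f : ZMod n → V), 4 ≤ n ∧ Function.Injective f ∧
      ∀ i j : ZMod n, G.Adj (f i) (f j) ↔ (j = i + 1 ∨ i = j + 1)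

/-!
If `v₀` is adjacent in `G` to neither `v₁` nor `v₂`, then `v₀` itself is a witness. If it is
adjacent to `v₁` but not to `v₂`, the `G^s`-edge `v₀v₁` provides a neighbour `u` of `v₀` outside
`N[v₁]`; simpliciality of `s` puts `u` outside `N[s]`, and `u` is then a witness unless it is
adjacent to `v₂`, in which case `v₀ v₁ v₂ u` is a chordless 4-cycle.
-/

section

variable {V : Type*} {G : SimpleGraph V} {s u v w v₀ v₁ v₂ a b c d : V}

theorem mem_closedNbr : u ∈ closedNbr G v ↔ u = v ∨ G.Adj v u := Iff.rfl

theorem Chordal.adj_or_adj_of_cycle4 (hG : Chordal G) (hab : G.Adj a b) (hbc : G.Adj b c)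
    (hcd : G.Adj c d) (hda : G.Adj d a) (hac : a ≠ c) (hbd : b ≠ d) :
    G.Adj a c ∨ G.Adj b d := by
  by_contra! ⟨hac', hbd'⟩
  have hca' : ¬ G.Adj c a := fun h => hac' h.symm
  have hdb' : ¬ G.Adj d b := fun h => hbd' h.symm
  refine hG ⟨4, ![a, b, c, d], le_rfl, fun i j hij => ?_, ?_⟩
  · fin_cases i <;> fin_cases j <;> first | rfl | simp_all [hab.ne, hbc.ne, hcd.ne, hda.ne,
      hab.ne', hbc.ne', hcd.ne', hda.ne', hac.symm, hbd.symm]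
  · -- `ZMod 4` is `Fin 4` by definition; only there do the numerals from `fin_cases` reduce.
    show ∀ i j : Fin 4, G.Adj (![a, b, c, d] i) (![a, b, c, d] j) ↔ (j = i + 1 ∨ i = j + 1)
    intro i j
    fin_cases i <;> fin_cases j <;>
      simp [hab, hbc, hcd, hda, hab.symm, hbc.symm, hcd.symm, hda.symm, hac', hbd', hca', hdb']

theorem auxGraph_adj_iff_of_not_mem_of_mem (hu : u ∉ closedNbr G s) (hv : v ∈ closedNbr G s) :
    (auxGraph G s).Adj u v ↔ ¬ closedNbr G u ⊆ closedNbr G v := by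
  simp only [auxGraph, hu, hv, not_true_eq_false, not_false_eq_true, false_and, and_false,
    true_and, false_or]
  exact and_iff_right (hv.ne_of_notMem hu).symm

theorem cliqueWitness_triple (hv₀ : v₀ ∉ closedNbr G s) (hv₁ : v₁ ∈ closedNbr G s)
    (hv₂ : v₂ ∈ closedNbr G s) (hw : w ∉ closedNbr G s) (hw₀ : v₀ ∈ closedNbr G w)
    (hw₁ : v₁ ∉ closedNbr G w) (hw₂ : v₂ ∉ closedNbr G w) :
    CliqueWitness G s {v₀, v₁, v₂} w := by
  refine ⟨hw, ?_⟩
  rintro x (rfl | rfl | rfl)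
  · exact iff_of_true hw₀ hv₀
  · exact iff_of_false hw₁ (not_not_intro hv₁)
  · exact iff_of_false hw₂ (not_not_intro hv₂)

theorem exists_cliqueWitness_of_adj_of_not_adj (hG : Chordal G) (hs : Simplicial G s)
    (hv₀ : v₀ ∉ closedNbr G s) (hv₁ : v₁ ∈ closedNbr G s) (hv₂ : v₂ ∈ closedNbr G s)
    (he : (auxGraph G s).Adj v₀ v₁) (h₀₁ : G.Adj v₀ v₁) (h₀₂ : ¬ G.Adj v₀ v₂) :
    ∃ w, CliqueWitness G s {v₀, v₁, v₂} w := by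
  have h₁₂ : G.Adj v₁ v₂ := hs hv₁ hv₂ fun h => h₀₂ (h ▸ h₀₁)
  obtain ⟨u, hu₀, hu₁⟩ := Set.not_subset.mp ((auxGraph_adj_iff_of_not_mem_of_mem hv₀ hv₁).mp he)
  simp only [mem_closedNbr, not_or] at hu₀ hu₁
  obtain ⟨hu₁v₁, hv₁u⟩ := hu₁
  have hv₀u : G.Adj v₀ u := hu₀.resolve_left fun h => hv₁u (h ▸ h₀₁.symm)
  have hu : u ∉ closedNbr G s := fun h => hv₁u (hs hv₁ h (Ne.symm hu₁v₁))
  have hv₂u : ¬ G.Adj v₂ u := fun h =>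
    (hG.adj_or_adj_of_cycle4 h₀₁ h₁₂ h hv₀u.symm (hv₂.ne_of_notMem hv₀).symm
      (Ne.symm hu₁v₁)).elim h₀₂ hv₁u
  refine ⟨u, cliqueWitness_triple hv₀ hv₁ hv₂ hu (Or.inr hv₀u.symm) ?_ ?_⟩
  · rintro (h | h)
    exacts [hu₁v₁ h.symm, hv₁u h.symm]
  · rintro (h | h)
    exacts [hu (h ▸ hv₂), hv₂u h.symm]

end

theorem stmt_5_general {V : Type*} (G : SimpleGraph V) (s v₀ v₁ v₂ : V)
    (hG : Chordal G) (hs : Simplicial G s)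
    (hcl : (auxGraph G s).IsClique {v₀, v₁, v₂})
    (hv1 : v₁ ∈ G.neighborSet s) (hv2 : v₂ ∈ G.neighborSet s)
    (hv0 : v₀ ∉ closedNbr G s)
    (hnow : ¬ ∃ w : V, CliqueWitness G s {v₀, v₁, v₂} w) :
    G.IsClique {v₀, v₁, v₂} := by
  have hv₁ : v₁ ∈ closedNbr G s := Set.mem_insert_of_mem _ hv1
  have hv₂ : v₂ ∈ closedNbr G s := Set.mem_insert_of_mem _ hv2
  have he₁ : (auxGraph G s).Adj v₀ v₁ := hcl (by simp) (by simp) (hv₁.ne_of_notMem hv0).symm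
  have he₂ : (auxGraph G s).Adj v₀ v₂ := hcl (by simp) (by simp) (hv₂.ne_of_notMem hv0).symm
  have h₀ : G.Adj v₀ v₁ ∧ G.Adj v₀ v₂ := by
    by_contra h
    apply hnow
    by_cases h₀₁ : G.Adj v₀ v₁
    · exact exists_cliqueWitness_of_adj_of_not_adj hG hs hv0 hv₁ hv₂ he₁ h₀₁ (h ⟨h₀₁, ·⟩)
    by_cases h₀₂ : G.Adj v₀ v₂
    · rw [Set.pair_comm]
      exact exists_cliqueWitness_of_adj_of_not_adj hG hs hv0 hv₂ hv₁ he₂ h₀₂ h₀₁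
    refine ⟨v₀, cliqueWitness_triple hv0 hv₁ hv₂ hv0 (Set.mem_insert _ _) ?_ ?_⟩
    · rintro (h | h)
      exacts [hv₁.ne_of_notMem hv0 h, h₀₁ h]
    · rintro (h | h)
      exacts [hv₂.ne_of_notMem hv0 h, h₀₂ h]
  refine SimpleGraph.isClique_insert.mpr ⟨SimpleGraph.isClique_pair.mpr (hs hv₁ hv₂), ?_⟩
  rintro x (rfl | rfl) -
  exacts [h₀.1, h₀.2]

/-- If {v₀, v₁, v₂} is a clique of G^s with v₁, v₂ ∈ N_G(s), v₀ ∉ N_G[s],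
and the clique has no witness, then {v₀, v₁, v₂} is a clique of G. -/
theorem stmt_5 {V : Type*} [Fintype V] (G : SimpleGraph V) (s v₀ v₁ v₂ : V)
    (hG : Chordal G) (hs : Simplicial G s)
    (h01 : v₀ ≠ v₁) (h02 : v₀ ≠ v₂) (h12 : v₁ ≠ v₂)
    (hcl : (auxGraph G s).IsClique {v₀, v₁, v₂})
    (hv1 : v₁ ∈ G.neighborSet s) (hv2 : v₂ ∈ G.neighborSet s)
    (hv0 : v₀ ∉ closedNbr G s)
    (hnow : ¬ ∃ w : V, CliqueWitness G s {v₀, v₁, v₂} w) :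
    G.IsClique {v₀, v₁, v₂} :=
  stmt_5_general G s v₀ v₁ v₂ hG hs hcl hv1 hv2 hv0 hnow
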